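/- Every proper level-1 network is tree-based. -/

import Mathlib

open SimpleGraph

/-- Degree of a vertex (as the cardinality of its neighbour set). -/
noncomputable def deg {W : Type*} (G : SimpleGraph W) (v : W) : ℕ :=
  (G.neighborSet v).ncard

/-- `T` is a support-tree for `G` with leaf set `X`: a spanning tree of `G`
whose leaves (vertices of degree at most 1) are exactly `X`. -/
def IsSupportTree {W : Type*} (G T : SimpleGraph W) (X : Set W) : Prop :=
  T ≤ G ∧ T.IsTree ∧ {v | deg T v ≤ 1} = X

/-- A graph is tree-based on `X` if it has a support-tree with leaf set `X`. -/
def TreeBased {W : Type*} (G : SimpleGraph W) (X : Set W) : Prop :=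
  ∃ T, IsSupportTree G T X

/-- An unrooted phylogenetic network on `X`: a connected graph all of whose
vertices have degree 1 or 3 (allowing the single-vertex convention via `≤ 1`),
whose leaves are exactly `X`. -/
def IsNetwork {W : Type*} (G : SimpleGraph W) (X : Set W) : Prop :=
  G.Connected ∧ (∀ v, deg G v ≤ 1 ∨ deg G v = 3) ∧ {v | deg G v ≤ 1} = X

/-- The cut-edge `{u,v}` induces a split of `X`: each side of the deleted edge
contains an element of `X`. -/
def InducesSplit {W : Type*} (G : SimpleGraph W) (X : Set W) (u v : W) : Prop :=
  (∃ a ∈ X, (G.deleteEdges {s(u, v)}).Reachable u a) ∧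
    ∃ b ∈ X, (G.deleteEdges {s(u, v)}).Reachable v b

/-- A network is proper if every cut-edge induces a split of `X`. -/
def ProperNet {W : Type*} (G : SimpleGraph W) (X : Set W) : Prop :=
  ∀ u v : W, (s(u, v) ∈ G.edgeSet ∧ G.IsBridge s(u, v)) → InducesSplit G X u v

/-- A network is simple if every cut-edge is trivial, i.e. has a leaf endpoint. -/
def SimpleNet {W : Type*} (G : SimpleGraph W) (X : Set W) : Prop :=
  ∀ u v : W, (s(u, v) ∈ G.edgeSet ∧ G.IsBridge s(u, v)) → u ∈ X ∨ v ∈ X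

/-- A graph is bridgeless if it has no cut-edge. -/
def Bridgeless {W : Type*} (H : SimpleGraph W) : Prop :=
  ∀ e, ¬ (e ∈ H.edgeSet ∧ H.IsBridge e)

/-- A blob of `G`: a maximal connected subgraph without a cut-edge that is not
a single vertex. -/
def IsBlob {W : Type*} (G : SimpleGraph W) (B : G.Subgraph) : Prop :=
  B.verts.Nontrivial ∧ B.Connected ∧ Bridgeless B.coe ∧
    ∀ B' : G.Subgraph, B'.verts.Nontrivial → B'.Connected → Bridgeless B'.coe →
      B ≤ B' → B = B'

/-- The simple network `B_N` associated to a blob `B`: the union of `B` with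
all cut-edges of `G` incident to `B`. -/
def blobNet {W : Type*} (G : SimpleGraph W) (B : G.Subgraph) : G.Subgraph where
  verts := B.verts ∪ {w | ∃ u ∈ B.verts, s(u, w) ∈ G.edgeSet ∧ G.IsBridge s(u, w)}
  Adj a b := B.Adj a b ∨ ((s(a, b) ∈ G.edgeSet ∧ G.IsBridge s(a, b)) ∧ (a ∈ B.verts ∨ b ∈ B.verts))
  adj_sub := by
    rintro v w (h | ⟨h, -⟩)
    · exact B.adj_sub h
    · exact (SimpleGraph.mem_edgeSet G).mp h.1
  edge_vert := by
    rintro v w (h | ⟨h, hv | hw⟩)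
    · exact Or.inl (B.edge_vert h)
    · exact Or.inl hv
    · exact Or.inr ⟨w, hw, by rwa [Sym2.eq_swap]⟩
  symm := ⟨by
    rintro v w (h | ⟨h, hc⟩)
    · exact Or.inl (B.adj_symm h)
    · exact Or.inr ⟨by rwa [Sym2.eq_swap], hc.symm⟩⟩

/-- The leaf set of `B_N`: endpoints of incident cut-edges not lying in `B`. -/
def blobNetLeaves {W : Type*} (G : SimpleGraph W) (B : G.Subgraph) :
    Set (blobNet G B).verts :=
  {w | (w : W) ∉ B.verts}

/-- `G` is a level-`k` network: at most `k` edges must be removed from each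
blob to obtain a tree. -/
def Level {W : Type*} (G : SimpleGraph W) (k : ℕ) : Prop :=
  ∀ B : G.Subgraph, IsBlob G B → B.edgeSet.ncard ≤ B.verts.ncard - 1 + k
/-- The network `N − x`: delete leaf `x` and its incident edge and suppress the
resulting degree-2 vertex `v` (the former neighbour of `x`). -/
def suppressAdj {V : Type*} (G : SimpleGraph V) (x v : V) :
    SimpleGraph {w : V // w ≠ x ∧ w ≠ v} where
  Adj a b := a ≠ b ∧ (G.Adj a b ∨ (G.Adj v a ∧ G.Adj v b))
  symm := ⟨by
    rintro a b ⟨h1, h2 | ⟨h3, h4⟩⟩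
    · exact ⟨h1.symm, Or.inl h2.symm⟩
    · exact ⟨h1.symm, Or.inr ⟨h4, h3⟩⟩⟩
  loopless := ⟨by rintro a ⟨h1, -⟩; exact h1 rfl⟩

/-- The network `C_e(x,y)`: replace the edge `e = {u,v}` of `C` by a path
`u – w₁ – w₂ – v` and attach pendant leaves `x = Sum.inr 2` to `w₁ = Sum.inr 0`
and `y = Sum.inr 3` to `w₂ = Sum.inr 1`. -/
def extGraph {W : Type*} (C : SimpleGraph W) (u v : W) : SimpleGraph (W ⊕ Fin 4) :=
  SimpleGraph.fromEdgeSet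
    ((Sym2.map Sum.inl) '' (C.edgeSet \ {s(u, v)}) ∪
      {s(Sum.inl u, Sum.inr 0), s(Sum.inr 0, Sum.inr 1), s(Sum.inr 1, Sum.inl v),
       s(Sum.inr 0, Sum.inr 2), s(Sum.inr 1, Sum.inr 3)})

/-- The leaves `x` and `y` of `C_e(x,y)`. -/
def extLeaves (W : Type*) : Set (W ⊕ Fin 4) := {Sum.inr 2, Sum.inr 3}

/-- The Petersen graph, realized as the Kneser graph K(5,2). -/
def petersen : SimpleGraph {s : Finset (Fin 5) // s.card = 2} where
  Adj a b := Disjoint (a : Finset (Fin 5)) (b : Finset (Fin 5))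
  symm := ⟨fun a b h => h.symm⟩
  loopless := ⟨fun a h => by
    have h2 : (a : Finset (Fin 5)) = ∅ := by
      simpa using disjoint_self.mp h
    have := a.2
    rw [h2] at this
    simp at this⟩

/-- `D` is an orientation of the edges of `G`. -/
def IsOrientation {V : Type*} (G : SimpleGraph V) (D : V → V → Prop) : Prop :=
  (∀ u v, G.Adj u v ↔ (D u v ∨ D v u)) ∧ ∀ u v, ¬ (D u v ∧ D v u)

noncomputable def outdeg {α : Type*} (r : α → α → Prop) (v : α) : ℕ := {w | r v w}.ncard
noncomputable def indeg {α : Type*} (r : α → α → Prop) (v : α) : ℕ := {w | r w v}.ncard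

/-- A rooted (binary) phylogenetic network with root `ρ` and leaf set `Y`:
a DAG with a unique root of indegree 0 and outdegree 2, leaves (outdegree 0,
indegree 1) exactly `Y`, and all non-root vertices of total degree 1 or 3. -/
def IsRootedNetwork {α : Type*} (r : α → α → Prop) (ρ : α) (Y : Set α) : Prop :=
  (∀ v, ¬ Relation.TransGen r v v) ∧
  indeg r ρ = 0 ∧ outdeg r ρ = 2 ∧
  (∀ v, indeg r v = 0 → v = ρ) ∧
  (∀ v, v ≠ ρ → indeg r v + outdeg r v = 1 ∨ indeg r v + outdeg r v = 3) ∧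
  {v | outdeg r v = 0} = Y ∧ (∀ v ∈ Y, indeg r v = 1)

/-- A rooted network is tree-based if it contains a spanning arborescence
rooted at `ρ` whose leaf set is `Y`. -/
def RootedTreeBased {α : Type*} (r : α → α → Prop) (ρ : α) (Y : Set α) : Prop :=
  ∃ t : α → α → Prop, (∀ a b, t a b → r a b) ∧
    (∀ v, Relation.ReflTransGen t ρ v) ∧
    (∀ v, v ≠ ρ → indeg t v = 1) ∧ indeg t ρ = 0 ∧
    {v | outdeg t v = 0} = Y

/-- `T` is obtained from `T'` by suppressing all degree-2 vertices, via the
embedding `f` of the vertices of `T` into those of `T'`. -/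
def Suppresses {A B : Type*} (T' : SimpleGraph A) (T : SimpleGraph B) (f : B → A) : Prop :=
  Function.Injective f ∧
  (∀ a : A, deg T' a ≠ 2 → a ∈ Set.range f) ∧
  (∀ b : B, deg T' (f b) ≠ 2) ∧
  ∀ b b' : B, T.Adj b b' ↔
    ∃ p : T'.Walk (f b) (f b'), p.IsPath ∧
      ∀ a ∈ p.support, a ≠ f b → a ≠ f b' → deg T' a = 2

/-- `G` is fully tree-based on `X`: every subtree of `G` whose leaf set is `X`
is spanning (hence a support-tree). -/
def FullyTreeBased {W : Type*} (G : SimpleGraph W) (X : Set W) : Prop :=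
  ∀ H : G.Subgraph, H.Connected → H.coe.IsAcyclic →
    {v | v ∈ H.verts ∧ (H.neighborSet v).ncard ≤ 1} = X → H.IsSpanning

/-!
In a level-1 network every blob is a single cycle. A vertex of such a cycle has degree 3, so its
third edge is a bridge, and every cycle through it uses both of its cycle edges. Deleting cycle
edges one at a time therefore never lowers a degree below 2 and yields a spanning tree whose
leaves are exactly the leaves of the network.
-/

namespace SimpleGraph

variable {V : Type*} {G : SimpleGraph V}

lemma not_isBridge_map {W : Type*} {G' : SimpleGraph W} (f : G →g G')
    (hf : Function.Injective f) {e : Sym2 V} (he : e ∈ G.edgeSet) (h : ¬ G.IsBridge e) :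
    ¬ G'.IsBridge (e.map f) := by
  obtain ⟨u, c, hc, hec⟩ : ∃ u, ∃ c : G.Walk u u, c.IsCycle ∧ e ∈ c.edges := by
    simpa [isBridge_iff_forall_cycle_notMem he] using h
  refine fun hb => hb.notMem_edges_of_isCycle (hc.map hf) ?_
  rw [Walk.edges_map]
  exact List.mem_map_of_mem hec

lemma Connected.card_le_card_edgeSet_of_not_isAcyclic [Finite V] (hc : G.Connected)
    (ha : ¬ G.IsAcyclic) : Nat.card V ≤ Nat.card G.edgeSet := by
  have hle := hc.card_vert_le_card_edgeSet_add_one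
  have hne : Nat.card G.edgeSet + 1 ≠ Nat.card V := fun h =>
    ha (isTree_iff_connected_and_card.mpr ⟨hc, h⟩).isAcyclic
  omega

lemma isBridge_of_deg_le_one [Finite V] {u v : V} (huv : G.Adj u v) (hu : deg G u ≤ 1) :
    G.IsBridge s(u, v) := by
  have hnbr : G.neighborSet u = {v} :=
    (Set.ncard_le_one_iff_subsingleton.mp hu).eq_singleton_of_mem huv
  rw [isBridge_iff_forall_walk_mem_edges]
  rintro (_ | ⟨h, p⟩)
  · exact absurd rfl huv.ne
  · have hw : _ ∈ G.neighborSet u := h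
    rw [hnbr, Set.mem_singleton_iff] at hw
    subst hw
    simp

lemma neighborSet_deleteEdges_of_ne {x y a : V} (hax : a ≠ x) (hay : a ≠ y) :
    (G.deleteEdges {s(x, y)}).neighborSet a = G.neighborSet a := by
  ext b
  simp only [mem_neighborSet, deleteEdges_adj, Set.mem_singleton_iff, Sym2.eq_iff]
  tauto

lemma neighborSet_subset_insert_deleteEdges (x y : V) :
    G.neighborSet x ⊆ insert y ((G.deleteEdges {s(x, y)}).neighborSet x) := by
  intro b hb
  by_cases hby : b = y
  · exact Or.inl hby
  · rw [Set.mem_insert_iff, mem_neighborSet, deleteEdges_adj]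
    refine Or.inr ⟨hb, ?_⟩
    simp only [Set.mem_singleton_iff, Sym2.eq_iff]
    rintro (⟨-, rfl⟩ | ⟨-, rfl⟩)
    exacts [hby rfl, hb.ne rfl]

lemma deg_deleteEdges_le_one_iff [Finite V] {x y : V} (hx : 3 ≤ deg G x) (hy : 3 ≤ deg G y)
    (a : V) : deg (G.deleteEdges {s(x, y)}) a ≤ 1 ↔ deg G a ≤ 1 := by
  have hend : ∀ {x y : V}, 3 ≤ deg G x → 2 ≤ deg (G.deleteEdges {s(x, y)}) x := by
    intro x y hx
    have := (Set.ncard_le_ncard (neighborSet_subset_insert_deleteEdges (G := G) x y)).trans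
      (Set.ncard_insert_le _ _)
    unfold deg at hx ⊢
    omega
  by_cases hax : a = x
  · subst hax
    have := hend (y := y) hx
    omega
  by_cases hay : a = y
  · subst hay
    have := hend (y := x) hy
    rw [Sym2.eq_swap] at this
    omega
  rw [deg, deg, neighborSet_deleteEdges_of_ne hax hay]

namespace Subgraph

lemma ncard_edgeSet_coe (K : G.Subgraph) : K.coe.edgeSet.ncard = K.edgeSet.ncard := by
  rw [← image_coe_edgeSet_coe]
  exact (Set.ncard_image_of_injective _ (Sym2.map.injective Subtype.val_injective)).symm

lemma exists_isCycle_coe_of_toSubgraph_le {K : G.Subgraph} {z : V} {c : G.Walk z z}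
    (hc : c.IsCycle) (hcK : c.toSubgraph ≤ K) :
    ∃ (z' : K.verts) (c' : K.coe.Walk z' z'), c'.IsCycle ∧
      c.edges = c'.edges.map (Sym2.map Subtype.val) := by
  let c' := c.mapToSubgraph.map (inclusion hcK)
  have hmap : c'.map K.hom = c := by
    rw [Walk.map_map]
    exact c.map_mapToSubgraph_hom
  refine ⟨_, c', (Walk.isCycle_map_iff_of_injective hom_injective).mp (by rwa [hmap]), ?_⟩
  have hedges := congrArg Walk.edges hmap
  rw [Walk.edges_map] at hedges
  exact hedges.symm

lemma not_isBridge_coe_of_le {H K : G.Subgraph} (hHK : H ≤ K) (hH : Bridgeless H.coe)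
    {a b : K.verts} (hab : H.Adj a b) : ¬ K.coe.IsBridge s(a, b) :=
  not_isBridge_map (inclusion hHK) (inclusion.injective hHK)
    (e := s(⟨a, H.edge_vert hab⟩, ⟨b, H.edge_vert hab.symm⟩)) hab
    (fun hb => hH _ ⟨hab, hb⟩)

lemma bridgeless_sup {H K : G.Subgraph} (hH : Bridgeless H.coe) (hK : Bridgeless K.coe) :
    Bridgeless (H ⊔ K).coe := by
  rintro ⟨a, b⟩ ⟨hab | hab, hb⟩
  exacts [not_isBridge_coe_of_le le_sup_left hH hab hb,
    not_isBridge_coe_of_le le_sup_right hK hab hb]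

end Subgraph

lemma Walk.IsCycle.bridgeless_toSubgraph {z : V} {c : G.Walk z z} (hc : c.IsCycle) :
    Bridgeless c.toSubgraph.coe := by
  rintro e ⟨he, hb⟩
  obtain ⟨z', c', hc', hedges⟩ := Subgraph.exists_isCycle_coe_of_toSubgraph_le hc le_rfl
  refine hb.notMem_edges_of_isCycle hc' ?_
  have hec : e.map Subtype.val ∈ c.edges :=
    (Walk.mem_edges_toSubgraph c).mp (Subgraph.image_coe_edgeSet_coe _ ▸ ⟨e, he, rfl⟩)
  rw [hedges] at hec
  obtain ⟨e', he', heq⟩ := List.mem_map.mp hec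
  rwa [← Sym2.map.injective Subtype.val_injective heq]

lemma exists_isBlob_ge [Finite V] {H : G.Subgraph} (hnt : H.verts.Nontrivial)
    (hc : H.Connected) (hb : Bridgeless H.coe) : ∃ B, IsBlob G B ∧ H ≤ B := by
  obtain ⟨B, hHB, hmax⟩ := Finite.exists_le_maximal
    (p := fun K : G.Subgraph => K.verts.Nontrivial ∧ K.Connected ∧ Bridgeless K.coe)
    ⟨hnt, hc, hb⟩
  exact ⟨B, ⟨hmax.prop.1, hmax.prop.2.1, hmax.prop.2.2,
    fun B' h1 h2 h3 hle => le_antisymm hle (hmax.2 ⟨h1, h2, h3⟩ hle)⟩, hHB⟩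

lemma IsBlob.le_of_mem_verts {B H : G.Subgraph} (hB : IsBlob G B) (hc : H.Connected)
    (hb : Bridgeless H.coe) {v : V} (hvB : v ∈ B.verts) (hvH : v ∈ H.verts) : H ≤ B := by
  obtain ⟨hnt, hBc, hBb, hmax⟩ := hB
  have hsup := hmax (B ⊔ H) (hnt.mono Set.subset_union_left)
    (Subgraph.connected_sup hBc.preconnected hc.preconnected ⟨v, hvB, hvH⟩)
    (Subgraph.bridgeless_sup hBb hb) le_sup_left
  exact hsup ▸ le_sup_right

/-- A blob of a level-1 graph has no more edges than vertices, so deleting any one of its edges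
leaves a tree. -/
lemma IsBlob.mem_edges_of_isCycle [Finite V] (hL : Level G 1) {B : G.Subgraph}
    (hB : IsBlob G B) {x y : V} (hxy : B.Adj x y) {z : V} {c : G.Walk z z} (hc : c.IsCycle)
    (hcB : c.toSubgraph ≤ B) : s(x, y) ∈ c.edges := by
  by_contra hxyc
  have hlevel := hL B hB
  obtain ⟨hnt, hBc, hBb, -⟩ := hB
  set e : Sym2 B.verts := s(⟨x, B.edge_vert hxy⟩, ⟨y, B.edge_vert hxy.symm⟩)
  have he : e ∈ B.coe.edgeSet := hxy
  obtain ⟨z', c', hc', hedges⟩ := Subgraph.exists_isCycle_coe_of_toSubgraph_le hc hcB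
  have hec' : e ∉ c'.edges := fun h => hxyc (hedges ▸ List.mem_map_of_mem h)
  have hcard := (hBc.coe.connected_delete_edge_of_not_isBridge (hBb e ⟨he, ·⟩))
    |>.card_le_card_edgeSet_of_not_isAcyclic
    fun hacyc => hacyc _ (Walk.IsCycle.toDeleteEdges _ {e} hc' fun _ h he => hec' (he ▸ h))
  rw [Nat.card_coe_set_eq, Nat.card_coe_set_eq, edgeSet_deleteEdges,
    Set.ncard_sdiff_singleton_of_mem he, Subgraph.ncard_edgeSet_coe] at hcard
  have hpos := hnt.nonempty.ncard_pos
  omega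

lemma isBridge_deleteEdges_of_level_one [Finite V] (hL : Level G 1) {u v w : V}
    (huv : G.Adj u v) (hnb : ¬ G.IsBridge s(u, v)) (hwv : w ≠ v) (huw : G.Adj u w) :
    (G.deleteEdges {s(u, v)}).IsBridge s(u, w) := by
  obtain ⟨z, c, hc, hec⟩ : ∃ z, ∃ c : G.Walk z z, c.IsCycle ∧ s(u, v) ∈ c.edges := by
    simpa [isBridge_iff_forall_cycle_notMem (G.mem_edgeSet.mpr huv)] using hnb
  have hu : u ∈ c.toSubgraph.verts :=
    c.mem_verts_toSubgraph.mpr (c.fst_mem_support_of_mem_edges hec)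
  have hv : v ∈ c.toSubgraph.verts :=
    c.mem_verts_toSubgraph.mpr (c.snd_mem_support_of_mem_edges hec)
  obtain ⟨B, hB, hcB⟩ := exists_isBlob_ge ⟨u, hu, v, hv, huv.ne⟩ c.toSubgraph_connected
    hc.bridgeless_toSubgraph
  have huwe : s(u, w) ∈ (G.deleteEdges {s(u, v)}).edgeSet := by
    simp [huw, hwv, huv.ne]
  rw [isBridge_iff_forall_cycle_notMem huwe]
  intro z' q hq hqe
  have hqG : (q.mapLe (deleteEdges_le _)).IsCycle := hq.mapLe _
  have huq : u ∈ (q.mapLe (deleteEdges_le _)).toSubgraph.verts :=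
    (Walk.mem_verts_toSubgraph _).mpr (by simpa using q.fst_mem_support_of_mem_edges hqe)
  have hqB := hB.le_of_mem_verts (q.mapLe _).toSubgraph_connected hqG.bridgeless_toSubgraph
    (hcB.1 hu) huq
  have hqv := hB.mem_edges_of_isCycle hL (hcB.2 ((c.mem_edges_toSubgraph).mpr hec)) hqG hqB
  rw [Walk.edges_mapLe_eq_edges] at hqv
  simpa [edgeSet_deleteEdges] using q.edges_subset_edgeSet hqv

/-- The second clause says that every cycle through `u` uses the edge `uv`. -/
def LeafSafeCycles (G : SimpleGraph V) : Prop :=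
  ∀ ⦃u v : V⦄, G.Adj u v → ¬ G.IsBridge s(u, v) →
    3 ≤ deg G u ∧ ∀ w, w ≠ v → G.Adj u w → (G.deleteEdges {s(u, v)}).IsBridge s(u, w)

lemma leafSafeCycles_of_level_one [Finite V] (hdeg : ∀ v, deg G v ≠ 2) (hL : Level G 1) :
    LeafSafeCycles G := fun u _ huv hnb =>
  ⟨by have := mt (isBridge_of_deg_le_one huv) hnb; have := hdeg u; omega,
    fun _ hwv huw => isBridge_deleteEdges_of_level_one hL huv hnb hwv huw⟩

lemma LeafSafeCycles.deleteEdges (hG : LeafSafeCycles G) {x y : V} (hxy : G.Adj x y)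
    (hnb : ¬ G.IsBridge s(x, y)) : LeafSafeCycles (G.deleteEdges {s(x, y)}) := by
  intro u v huv hnb'
  have huv' := deleteEdges_adj.mp huv
  have hnbG : ¬ G.IsBridge s(u, v) := fun h => hnb' (h.anti (deleteEdges_le _))
  have hnb'' : ¬ G.IsBridge s(y, x) := by rwa [Sym2.eq_swap]
  have hux : u ≠ x := by
    rintro rfl
    exact hnb' ((hG hxy hnb).2 v (fun hvy => huv'.2 (by simp [hvy])) huv'.1)
  have huy : u ≠ y := by
    rintro rfl
    have := (hG hxy.symm hnb'').2 v (fun hvx => huv'.2 (by simp [hvx, Sym2.eq_swap])) huv'.1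
    rw [Sym2.eq_swap] at this
    exact hnb' this
  refine ⟨by rw [deg, neighborSet_deleteEdges_of_ne hux huy]; exact (hG huv'.1 hnbG).1,
    fun w hwv huw => ?_⟩
  exact ((hG huv'.1 hnbG).2 w hwv (deleteEdges_le _ huw)).anti
    (deleteEdges_mono (deleteEdges_le _))

/-- Deleting a non-bridge edge of a cycle creates no new leaf, since both its ends have
degree at least `3`. -/
theorem Connected.exists_isTree_le_forall_deg_le_one_iff [Finite V] (hc : G.Connected)
    (hG : LeafSafeCycles G) : ∃ T ≤ G, T.IsTree ∧ ∀ a, deg T a ≤ 1 ↔ deg G a ≤ 1 := by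
  induction G using WellFoundedLT.induction with
  | _ G ih =>
  by_cases ha : G.IsAcyclic
  · exact ⟨G, le_rfl, ⟨hc, ha⟩, fun _ => Iff.rfl⟩
  obtain ⟨x, y, hxy, hnb⟩ : ∃ x y, G.Adj x y ∧ ¬ G.IsBridge s(x, y) := by
    simpa [isAcyclic_iff_forall_adj_isBridge] using ha
  have hlt : G.deleteEdges {s(x, y)} < G := by
    refine lt_of_le_of_ne (deleteEdges_le _) fun h => ?_
    have := h ▸ hxy
    simp at this
  obtain ⟨T, hTG, hT, hdegT⟩ := ih _ hlt (hc.connected_delete_edge_of_not_isBridge hnb)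
    (hG.deleteEdges hxy hnb)
  have hyx : ¬ G.IsBridge s(y, x) := by rwa [Sym2.eq_swap]
  exact ⟨T, hTG.trans (deleteEdges_le _), hT, fun a =>
    (hdegT a).trans (deg_deleteEdges_le_one_iff (hG hxy hnb).1 (hG hxy.symm hyx).1 a)⟩

end SimpleGraph

theorem stmt4_general {V : Type*} [Fintype V] (G : SimpleGraph V) (X : Set V)
    (hN : IsNetwork G X) (hL : Level G 1) :
    TreeBased G X := by
  obtain ⟨hconn, hdeg, rfl⟩ := hN
  have hG := leafSafeCycles_of_level_one (fun v => by have := hdeg v; omega) hL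
  obtain ⟨T, hTG, hT, hleaves⟩ := hconn.exists_isTree_le_forall_deg_le_one_iff hG
  exact ⟨T, hTG, hT, Set.ext hleaves⟩

/-- Every proper level-1 network is tree-based. -/
theorem stmt4 {V : Type*} [Fintype V] (G : SimpleGraph V) (X : Set V)
    (hN : IsNetwork G X) (hP : ProperNet G X) (hL : Level G 1) :
    TreeBased G X :=
  stmt4_general G X hN hL
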